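/- arXiv:1903.02255 — 4 statements merged into one kernel-verified Lean document; each statement's English description precedes it below -/
import Mathlib

section
/- For any code C ⊆ F_q^n with distance distribution (B_0, ..., B_n), the dual distance distribution components B'_i = (1/|C|) · Σ_{j=0}^{n} B_j · K_i^{(n,q)}(j) satisfy B'_i ≥ 0 for all i = 0, 1, ..., n. -/
open Finset

/-- Generalized binomial coefficient `C(z, j) = z(z-1)⋯(z-j+1)/j!` for real `z`. -/
noncomputable def realChoose (z : ℝ) (j : ℕ) : ℝ :=
  (∏ k ∈ Finset.range j, (z - k)) / (Nat.factorial j)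

/-- The Krawtchouk polynomial `K_i^{(n,q)}(z)`. -/
noncomputable def kraw (n q i : ℕ) (z : ℝ) : ℝ :=
  ∑ j ∈ Finset.range (i + 1),
    (-1 : ℝ) ^ j * ((q : ℝ) - 1) ^ (i - j) * (q : ℝ) ^ j *
      ((n - j).choose (n - i) : ℝ) * realChoose z j

/-- The distance distribution `B_i` of a code `C ⊆ F_q^n`. -/
noncomputable def distDistrib {n q : ℕ} (C : Finset (Fin n → Fin q)) (i : ℕ) : ℝ :=
  (((C ×ˢ C).filter (fun p => hammingDist p.1 p.2 = i)).card : ℝ) / (C.card : ℝ)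

/-- The dual distance distribution (MacWilliams transform) `B'_i` of a code. -/
noncomputable def dualDistDistrib {n q : ℕ} (C : Finset (Fin n → Fin q)) (i : ℕ) : ℝ :=
  (∑ j ∈ Finset.range (n + 1), distDistrib C j * kraw n q i j) / (C.card : ℝ)

/-!
At an integer distance `d ≤ n`, the Krawtchouk polynomial `K_i(d)` is the coefficient of `X ^ i`
in `(1 + (q - 1) X) ^ (n - d) (1 - X) ^ d`. Over a finite ring of size `q` carrying a primitive
additive character `ψ` (such as `ZMod q`), this generating function equals `∑ z, χ_z(w) X ^ wt z`
for any word `w` of weight `d`, where `χ_z(w) = ∏ k, ψ (z k * w k)`. Hence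
`K_i(d(x, y)) = ∑_{wt z = i} conj χ_z(x) χ_z(y)`, and summing over pairs of codewords gives
`|C|² B'_i = ∑_{x, y ∈ C} K_i(d(x, y)) = ∑_{wt z = i} |∑_{x ∈ C} χ_z(x)|² ≥ 0`.
-/

open Polynomial

lemma realChoose_natCast (d j : ℕ) : realChoose d j = d.choose j := by
  rw [realChoose, ← descPochhammer_eval_eq_prod_range, ← Nat.cast_choose_eq_descPochhammer_div]

noncomputable def krawGen (R : Type*) [CommRing R] (n q d : ℕ) : R[X] :=
  (1 + C ((q : R) - 1) * X) ^ (n - d) * (1 - X) ^ d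

section CoeffKrawGen

variable {R : Type*} [CommRing R]

lemma coeff_one_add_C_mul_X_pow (a : R) (m k : ℕ) :
    ((1 + C a * X) ^ m).coeff k = m.choose k * a ^ k := by
  have h : (1 + C a * X) ^ m = ((1 + X) ^ m).comp (C a * X) := by simp
  rw [h, comp_C_mul_X_coeff, coeff_one_add_X_pow, mul_comm]

lemma krawGen_eq_sum (n q d : ℕ) (hd : d ≤ n) :
    krawGen R n q d = ∑ j ∈ range (d + 1),
      C ((d.choose j : R) * (-q) ^ j) * X ^ j * (1 + C ((q : R) - 1) * X) ^ (n - j) := by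
  have h : (1 - X : R[X]) = C (-q : R) * X + (1 + C ((q : R) - 1) * X) := by
    simp only [C_neg, C_sub, C_1, C_eq_natCast]; ring
  rw [krawGen, h, add_pow (C (-q : R) * X), mul_sum]
  refine sum_congr rfl fun j _ => ?_
  rw [show n - j = (d - j) + (n - d) by grind, pow_add, C_mul, mul_pow, ← C_pow, ← C_eq_natCast]
  ring

lemma coeff_krawGen (n q d i : ℕ) (hd : d ≤ n) (hi : i ≤ n) :
    (krawGen R n q d).coeff i = ∑ j ∈ range (i + 1),
      (-1) ^ j * ((q : R) - 1) ^ (i - j) * q ^ j * ((n - j).choose (n - i) : R) * d.choose j := by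
  set t : ℕ → R := fun j ↦
    (-1) ^ j * ((q : R) - 1) ^ (i - j) * q ^ j * ((n - j).choose (n - i) : R) * d.choose j
  have ht : ∀ j, i < j → j ≤ n → t j = 0 := fun j hij hjn ↦ by
    simp [t, Nat.choose_eq_zero_of_lt (show n - j < n - i by omega)]
  rw [krawGen_eq_sum n q d hd, finsetSum_coeff]
  simp_rw [mul_assoc, coeff_C_mul, coeff_X_pow_mul', coeff_one_add_C_mul_X_pow]
  -- Both sides are the sum of `t` over `range (n + 1)`: the missing terms vanish.
  calc _ = ∑ j ∈ range (d + 1), t j := sum_congr rfl fun j hj ↦ by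
          rcases le_or_gt j i with hji | hji
          · rw [if_pos hji, ← Nat.choose_symm_of_eq_add (show n - j = (n - i) + (i - j) by omega)]
            rw [neg_pow]
            ring
          · rw [if_neg hji.not_ge, ht j hji (by grind)]; ring
    _ = ∑ j ∈ range (n + 1), t j := sum_subset (by grind) fun j _ hj ↦ by
          simp [t, Nat.choose_eq_zero_of_lt (show d < j by grind)]
    _ = ∑ j ∈ range (i + 1), t j :=
          (sum_subset (by grind) fun j hj hj' ↦ ht j (by grind) (by grind)).symm

end CoeffKrawGen

lemma ofReal_kraw_natCast {n q d i : ℕ} (hd : d ≤ n) (hi : i ≤ n) :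
    (kraw n q i d : ℂ) = (krawGen ℂ n q d).coeff i := by
  rw [coeff_krawGen n q d i hd hi, kraw]
  push_cast [realChoose_natCast]
  rfl

lemma pow_hammingNorm {ι M : Type*} [Fintype ι] {β : ι → Type*} [∀ k, Zero (β k)]
    [∀ k, DecidableEq (β k)] [CommMonoid M] (a : M) (z : ∀ k, β k) :
    a ^ hammingNorm z = ∏ k, if z k = 0 then 1 else a := by
  rw [prod_ite, prod_const_one, prod_const, one_mul]
  rfl

open ComplexConjugate

section Character

variable {R : Type*} [CommRing R] [Fintype R] [DecidableEq R] {ψ : AddChar R ℂ}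

lemma sum_C_addChar_mul_mul_ite (hψ : ψ.IsPrimitive) (b : R) :
    ∑ a : R, C (ψ (a * b)) * (if a = 0 then 1 else X) =
      if b = 0 then 1 + C ((Fintype.card R : ℂ) - 1) * X else 1 - X := by
  have hsum : ∑ a ∈ univ.erase 0, ψ (a * b) = ∑ a, ψ (a * b) - 1 := by
    rw [← add_sum_erase univ _ (mem_univ 0)]
    simp
  rw [← add_sum_erase univ _ (mem_univ 0),
    sum_congr rfl fun a ha ↦ by rw [if_neg (ne_of_mem_erase ha)], ← sum_mul, ← map_sum, hsum,
    AddChar.sum_mulShift b hψ, if_pos rfl, zero_mul, AddChar.map_zero_eq_one, map_one, mul_one]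
  split_ifs <;> simp [sub_eq_add_neg]

variable {ι : Type*} [Fintype ι] [DecidableEq ι]

lemma sum_C_prod_addChar_mul_X_pow_hammingNorm (hψ : ψ.IsPrimitive) (w : ι → R) :
    ∑ z : ι → R, C (∏ k, ψ (z k * w k)) * X ^ hammingNorm z
      = krawGen ℂ (Fintype.card ι) (Fintype.card R) (hammingNorm w) := by
  have hzero : #{k | w k = 0} = Fintype.card ι - hammingNorm w := by
    have := card_filter_add_card_filter_not (s := univ) (fun k ↦ w k = 0)
    have hnorm : hammingNorm w = #{k | ¬w k = 0} := rfl
    rw [card_univ] at this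
    omega
  calc _ = ∑ z : ι → R, ∏ k, C (ψ (z k * w k)) * (if z k = 0 then 1 else X) := by
          simp_rw [pow_hammingNorm, map_prod, prod_mul_distrib]
    _ = ∏ k, ∑ a : R, C (ψ (a * w k)) * (if a = 0 then 1 else X) :=
          (Fintype.prod_sum fun k a ↦ C (ψ (a * w k)) * (if a = 0 then 1 else X)).symm
    _ = ∏ k, if w k = 0 then 1 + C ((Fintype.card R : ℂ) - 1) * X else 1 - X := by
          simp_rw [sum_C_addChar_mul_mul_ite hψ]
    _ = _ := by
          rw [prod_ite, prod_const, prod_const, hzero, krawGen]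
          rfl

lemma coeff_krawGen_eq_sum_prod_addChar (hψ : ψ.IsPrimitive) (w : ι → R) (i : ℕ) :
    (krawGen ℂ (Fintype.card ι) (Fintype.card R) (hammingNorm w)).coeff i
      = ∑ z with hammingNorm z = i, ∏ k, ψ (z k * w k) := by
  rw [← sum_C_prod_addChar_mul_X_pow_hammingNorm hψ, finsetSum_coeff, sum_filter]
  simp_rw [coeff_C_mul_X_pow, eq_comm]

theorem sum_kraw_hammingDist_nonneg (hψ : ψ.IsPrimitive) (B : Finset (ι → R)) {i : ℕ}
    (hi : i ≤ Fintype.card ι) :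
    0 ≤ ∑ p ∈ B ×ˢ B, kraw (Fintype.card ι) (Fintype.card R) i (hammingDist p.1 p.2) := by
  set χ : (ι → R) → (ι → R) → ℂ := fun z x ↦ ∏ k, ψ (z k * x k)
  have hterm (x y : ι → R) : (kraw (Fintype.card ι) (Fintype.card R) i (hammingDist x y) : ℂ)
      = ∑ z with hammingNorm z = i, conj (χ z x) * χ z y := by
    rw [ofReal_kraw_natCast hammingDist_le_card_fintype hi, hammingDist_eq_hammingNorm,
      coeff_krawGen_eq_sum_prod_addChar hψ]
    refine sum_congr rfl fun z _ ↦ ?_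
    simp only [χ, map_prod, ← prod_mul_distrib, ← AddChar.map_neg_eq_conj,
      ← AddChar.map_add_eq_mul]
    simp [mul_add]
  have hsum :
      ((∑ p ∈ B ×ˢ B, kraw (Fintype.card ι) (Fintype.card R) i (hammingDist p.1 p.2) : ℝ) : ℂ)
        = ((∑ z with hammingNorm z = i, ‖∑ x ∈ B, χ z x‖ ^ 2 : ℝ) : ℂ) := by
    push_cast
    simp_rw [hterm]
    rw [sum_comm]
    refine sum_congr rfl fun z _ ↦ ?_
    rw [← Complex.conj_mul', map_sum, sum_mul_sum, sum_product]
  rw [Complex.ofReal_inj.1 hsum]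
  positivity

end Character

lemma sum_distDistrib_mul {n q : ℕ} (C : Finset (Fin n → Fin q)) (f : ℕ → ℝ) :
    ∑ j ∈ range (n + 1), distDistrib C j * f j
      = (∑ p ∈ C ×ˢ C, f (hammingDist p.1 p.2)) / #C := by
  have hdist : ∀ p ∈ C ×ˢ C, hammingDist p.1 p.2 ∈ range (n + 1) := fun p _ ↦
    mem_range_succ_iff.2 (hammingDist_le_card_fintype.trans_eq (Fintype.card_fin n))
  rw [← sum_fiberwise_of_maps_to hdist, sum_div]
  refine sum_congr rfl fun j _ ↦ ?_
  rw [sum_congr rfl fun p hp ↦ by rw [(mem_filter.1 hp).2], sum_const, nsmul_eq_mul, distDistrib,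
    div_mul_eq_mul_div]

theorem dualDistDistrib_nonneg_general (n q : ℕ) (hq : 2 ≤ q)
    (C : Finset (Fin n → Fin q)) :
    ∀ i : ℕ, i ≤ n → 0 ≤ dualDistDistrib C i := by
  intro i hi
  obtain ⟨m, rfl⟩ : ∃ m, q = m + 1 := ⟨q - 1, by omega⟩
  -- `ZMod (m + 1)` is `Fin (m + 1)` by definition, so `C` is a code over `ZMod (m + 1)`.
  have hpairs : 0 ≤ ∑ p ∈ C ×ˢ C, kraw n (m + 1) i (hammingDist p.1 p.2) := by
    have h := sum_kraw_hammingDist_nonneg (ZMod.isPrimitive_stdAddChar (m + 1))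
      (C : Finset (Fin n → ZMod (m + 1))) (i := i) (by simpa using hi)
    rw [Fintype.card_fin, ZMod.card] at h
    exact h
  rw [dualDistDistrib, sum_distDistrib_mul]
  exact div_nonneg (div_nonneg hpairs (Nat.cast_nonneg _)) (Nat.cast_nonneg _)

theorem dualDistDistrib_nonneg (n q : ℕ) (hn : 1 ≤ n) (hq : 2 ≤ q)
    (C : Finset (Fin n → Fin q)) (hC : C.Nonempty) :
    ∀ i : ℕ, i ≤ n → 0 ≤ dualDistDistrib C i :=
  dualDistDistrib_nonneg_general n q hq C
end

section
/- Linear Programming Bound for codes: if a real polynomial f(z) = Σ_{i=0}^{n} f_i K_i^{(n,q)}(z) satisfies f_0 > 0, f_i ≥ 0 for i = 1,...,n, f(0) > 0, and f(i) ≤ 0 for i = d, d+1, ..., n, then every code C ⊆ F_q^n with minimum distance at least d satisfies |C| ≤ f(0)/f_0. -/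
/-!
Delsarte's argument. Sum `f (d(x, y))` over ordered pairs of codewords. Off the diagonal the
distances lie in `[d, n]`, where `f ≤ 0`, so the sum is at most `|C| f(0)`. Expanding `f` in
Krawtchouk polynomials, the `i = 0` term contributes `c₀ |C|²` and every other term is nonnegative:
with the characters `χ_v(x) = ζ^(v·x)` of `(ℤ/q)ⁿ`, `K_i(d(x, y)) = ∑_{wt v = i} χ_v(x) conj χ_v(y)`,
so `∑_{x,y ∈ C} K_i(d(x, y)) = ∑_{wt v = i} |∑_{x ∈ C} χ_v(x)|²`. Hence `c₀ |C|² ≤ |C| f(0)`.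

The character identity is read off from generating functions: for `u` a vector of `q`-th roots of
unity with `D` entries different from `1`, `∏ₖ (X + ∑_{a ≠ 0} uₖ^a) = (X + q - 1)^(n - D) (X - 1)^D`,
and `K_i(D)` is the coefficient of `X^(n - i)` on the right.
-/

open Finset

open ComplexConjugate

theorem realChoose_natCast_s7 (w j : ℕ) : realChoose w j = w.choose j := by
  rw [realChoose, Nat.cast_choose_eq_descPochhammer_div, descPochhammer_eval_eq_prod_range]

theorem kraw_zero (n q : ℕ) (z : ℝ) : kraw n q 0 z = 1 := by
  simp [kraw, realChoose]

section

open Polynomial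

theorem X_add_C_pow_mul_X_sub_one_pow {R : Type*} [CommRing R] (a : R) {n w : ℕ} (hw : w ≤ n) :
    (X + C a) ^ (n - w) * (X - 1) ^ w
      = ∑ j ∈ range (w + 1), C ((-(a + 1)) ^ j * w.choose j) * (X + C a) ^ (n - j) := by
  have hsplit : (X - 1 : R[X]) = C (-(a + 1)) + (X + C a) := by
    simp only [map_neg, map_add, map_one]; ring
  rw [hsplit, add_pow (C _), mul_sum]
  refine sum_congr rfl fun j hj => ?_
  have hjw : j ≤ w := Nat.lt_succ_iff.mp (mem_range.mp hj)
  rw [show n - j = (n - w) + (w - j) by omega, pow_add, C_mul, C_pow, ← C_eq_natCast]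
  ring

theorem kraw_natCast_eq_coeff {n q i w : ℕ} (hi : i ≤ n) (hw : w ≤ n) :
    (kraw n q i w : ℂ) = ((X + C ((q : ℂ) - 1)) ^ (n - w) * (X - 1) ^ w).coeff (n - i) := by
  set T : ℕ → ℂ := fun j => (-q : ℂ) ^ j * ((q : ℂ) - 1) ^ (i - j) * (n - j).choose (n - i)
    * w.choose j
  have hT : ∀ j, i < j → j ≤ n → T j = 0 := fun j hij hjn => by
    simp [T, Nat.choose_eq_zero_of_lt (show n - j < n - i by omega)]
  have hkraw : (kraw n q i w : ℂ) = ∑ j ∈ range (n + 1), T j := by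
    rw [← sum_subset (range_subset_range.mpr (by omega : i + 1 ≤ n + 1))
      fun j hjn hji => hT j (by simpa using hji) (by simpa [Nat.lt_succ_iff] using hjn)]
    simp only [kraw, realChoose_natCast_s7, T]
    push_cast
    refine sum_congr rfl fun j _ => ?_
    rw [neg_pow]
    ring
  rw [hkraw, X_add_C_pow_mul_X_sub_one_pow _ hw, finsetSum_coeff]
  rw [← sum_subset (range_subset_range.mpr (by omega : w + 1 ≤ n + 1))
    fun j _ hj => by simp [T, Nat.choose_eq_zero_of_lt (show w < j by simpa using hj)]]
  refine sum_congr rfl fun j hj => ?_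
  have hjw : j ≤ w := Nat.lt_succ_iff.mp (mem_range.mp hj)
  rw [coeff_C_mul, coeff_X_add_C_pow]
  rcases le_or_gt j i with hji | hij
  · rw [show n - j - (n - i) = i - j by omega]
    simp only [T, sub_add_cancel]
    ring
  · rw [hT j hij (by omega), Nat.choose_eq_zero_of_lt (show n - j < n - i by omega)]
    simp

theorem sum_fin_pow_eq_ite {K : Type*} [Field K] [DecidableEq K] {q : ℕ} {u : K}
    (hu : u ^ q = 1) : ∑ a : Fin q, u ^ (a : ℕ) = if u = 1 then (q : K) else 0 := by
  rw [Fin.sum_univ_eq_sum_range (u ^ ·)]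
  split_ifs with h
  · simp [h]
  · rw [geom_sum_eq h, hu, sub_self, zero_div]

theorem card_filter_eq_zero_eq_sub_hammingNorm {n q : ℕ} [NeZero q] (v : Fin n → Fin q) :
    #{k | v k = 0} = n - hammingNorm v := by
  have := card_filter_add_card_filter_not (s := univ) fun k => v k = 0
  simp only [card_univ, Fintype.card_fin] at this
  simp only [hammingNorm, ne_eq]
  omega

theorem coeff_prod_X_add_C_sum_pow {R : Type*} [CommRing R] {n q : ℕ} [NeZero q]
    (u : Fin n → R) {i : ℕ} (hi : i ≤ n) :
    (∏ k, (X + C (∑ a : Fin q, u k ^ (a : ℕ) - 1))).coeff (n - i)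
      = ∑ v : Fin n → Fin q with hammingNorm v = i, ∏ k, u k ^ (v k : ℕ) := by
  have hfactor : ∀ k, X + C (∑ a : Fin q, u k ^ (a : ℕ) - 1)
      = ∑ a : Fin q, C (u k ^ (a : ℕ)) * X ^ (if a = 0 then 1 else 0) := fun k => by
    have hsummand : ∀ a : Fin q, C (u k ^ (a : ℕ)) * X ^ (if a = 0 then 1 else 0)
        = C (u k ^ (a : ℕ)) + if a = 0 then X - 1 else 0 := fun a => by
      split_ifs with ha <;> simp [ha]
    rw [sum_congr rfl fun a _ => hsummand a, sum_add_distrib, sum_ite_eq', if_pos (mem_univ _),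
      map_sub, map_sum, map_one]
    ring
  have hterm : ∀ v : Fin n → Fin q,
      ∏ k, C (u k ^ (v k : ℕ)) * X ^ (if v k = 0 then 1 else 0)
        = C (∏ k, u k ^ (v k : ℕ)) * X ^ (n - hammingNorm v) := fun v => by
    rw [prod_mul_distrib, map_prod, prod_pow_eq_pow_sum, ← card_filter_eq_zero_eq_sub_hammingNorm,
      card_filter]
  rw [prod_congr rfl fun k _ => hfactor k, Fintype.prod_sum, sum_congr rfl fun v _ => hterm v,
    finsetSum_coeff, sum_filter]
  refine sum_congr rfl fun v _ => ?_
  have hv : hammingNorm v ≤ n := by simpa using hammingNorm_le_card_fintype (x := v)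
  rw [coeff_C_mul_X_pow]
  exact if_congr (by omega) rfl rfl

theorem sum_hammingNorm_eq_kraw {n q : ℕ} [NeZero q] {u : Fin n → ℂ} (hu : ∀ k, u k ^ q = 1)
    {i : ℕ} (hi : i ≤ n) :
    ∑ v : Fin n → Fin q with hammingNorm v = i, ∏ k, u k ^ (v k : ℕ)
      = kraw n q i #{k | u k ≠ 1} := by
  have hD : #{k | u k ≠ 1} ≤ n := (card_filter_le _ _).trans_eq (card_fin n)
  have hfactor : ∀ k, X + C (∑ a : Fin q, u k ^ (a : ℕ) - 1)
      = if u k = 1 then X + C ((q : ℂ) - 1) else X - 1 := fun k => by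
    rw [sum_fin_pow_eq_ite (hu k)]
    split_ifs <;> simp [sub_eq_add_neg]
  have hcard : #{k | u k = 1} = n - #{k | u k ≠ 1} := by
    have := card_filter_add_card_filter_not (s := univ) fun k => u k = 1
    simp only [card_univ, Fintype.card_fin, ne_eq] at this ⊢
    omega
  rw [← coeff_prod_X_add_C_sum_pow u hi, kraw_natCast_eq_coeff hi hD,
    prod_congr rfl fun k _ => hfactor k, prod_ite, prod_const, prod_const, hcard]

end

noncomputable def wordChar (ζ : ℂ) {n q : ℕ} (v x : Fin n → Fin q) : ℂ :=
  ∏ k, ζ ^ ((v k : ℕ) * x k)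

theorem kraw_hammingDist_eq_sum_wordChar {n q : ℕ} [NeZero q] {ζ : ℂ} (hζ : IsPrimitiveRoot ζ q)
    {i : ℕ} (hi : i ≤ n) (x y : Fin n → Fin q) :
    (kraw n q i (hammingDist x y) : ℂ)
      = ∑ v : Fin n → Fin q with hammingNorm v = i, wordChar ζ v x * conj (wordChar ζ v y) := by
  have hconj : conj ζ = ζ⁻¹ := (Complex.inv_eq_conj (hζ.norm'_eq_one (NeZero.ne q))).symm
  set u : Fin n → ℂ := fun k => ζ ^ (x k : ℕ) * (ζ ^ (y k : ℕ))⁻¹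
  have hu : ∀ k, u k ^ q = 1 := fun k => by
    simp only [u, mul_pow, inv_pow, pow_right_comm ζ _ q, hζ.pow_eq_one, one_pow, inv_one,
      mul_one]
  have hu_eq_one : ∀ k, u k = 1 ↔ x k = y k := fun k => by
    rw [← Fin.val_inj, mul_inv_eq_one₀ (pow_ne_zero _ (hζ.ne_zero (NeZero.ne q)))]
    exact ⟨fun h => hζ.pow_inj (x k).isLt (y k).isLt h, fun h => h ▸ rfl⟩
  have hdist : #{k | u k ≠ 1} = hammingDist x y := by
    simp only [hammingDist, ne_eq, hu_eq_one]
  rw [← hdist, ← sum_hammingNorm_eq_kraw hu hi]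
  refine sum_congr rfl fun v _ => ?_
  simp only [wordChar, map_prod, map_pow, hconj, ← prod_mul_distrib, u]
  refine prod_congr rfl fun k _ => ?_
  ring

theorem sum_sum_kraw_hammingDist_nonneg {n q : ℕ} [NeZero q] {i : ℕ} (hi : i ≤ n)
    (C : Finset (Fin n → Fin q)) : 0 ≤ ∑ x ∈ C, ∑ y ∈ C, kraw n q i (hammingDist x y) := by
  set ζ := Complex.exp (2 * Real.pi * Complex.I / q)
  have hζ : IsPrimitiveRoot ζ q := Complex.isPrimitiveRoot_exp q (NeZero.ne q)
  have hnormSq : ∀ v, (Complex.normSq (∑ x ∈ C, wordChar ζ v x) : ℂ)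
      = ∑ x ∈ C, ∑ y ∈ C, wordChar ζ v x * conj (wordChar ζ v y) := fun v => by
    rw [← Complex.mul_conj, map_sum, sum_mul_sum]
  have hsum : ∑ x ∈ C, ∑ y ∈ C, kraw n q i (hammingDist x y)
      = ∑ v : Fin n → Fin q with hammingNorm v = i, Complex.normSq (∑ x ∈ C, wordChar ζ v x) := by
    apply Complex.ofReal_injective
    push_cast
    simp_rw [hnormSq, kraw_hammingDist_eq_sum_wordChar hζ hi]
    conv_lhs => rw [sum_congr rfl fun x _ => sum_comm, sum_comm]
  rw [hsum]
  exact sum_nonneg fun v _ => Complex.normSq_nonneg _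

theorem sum_sum_hammingDist_le {n q d : ℕ} {f : ℝ → ℝ} (hf : ∀ i : ℕ, d ≤ i → i ≤ n → f i ≤ 0)
    {C : Finset (Fin n → Fin q)} (hC : ∀ x ∈ C, ∀ y ∈ C, x ≠ y → d ≤ hammingDist x y) :
    ∑ x ∈ C, ∑ y ∈ C, f (hammingDist x y) ≤ #C * f 0 := by
  have hrow : ∀ x ∈ C, ∑ y ∈ C, f (hammingDist x y) ≤ f 0 := fun x hx => by
    rw [← add_sum_erase C _ hx, hammingDist_self, Nat.cast_zero, add_le_iff_nonpos_right]
    refine sum_nonpos fun y hy => ?_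
    obtain ⟨hyx, hyC⟩ := mem_erase.mp hy
    exact hf _ (hC x hx y hyC hyx.symm)
      ((hammingDist_le_card_fintype).trans_eq (Fintype.card_fin n))
  calc ∑ x ∈ C, ∑ y ∈ C, f (hammingDist x y) ≤ ∑ _x ∈ C, f 0 := sum_le_sum hrow
    _ = #C * f 0 := by rw [sum_const, nsmul_eq_mul]

theorem mul_card_sq_le_sum_sum_sum_kraw {n q : ℕ} [NeZero q] {c : ℕ → ℝ}
    (hc : ∀ i : ℕ, 1 ≤ i → i ≤ n → 0 ≤ c i) (C : Finset (Fin n → Fin q)) :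
    c 0 * #C ^ 2
      ≤ ∑ x ∈ C, ∑ y ∈ C, ∑ i ∈ range (n + 1), c i * kraw n q i (hammingDist x y) := by
  calc c 0 * #C ^ 2 = c 0 * ∑ x ∈ C, ∑ y ∈ C, kraw n q 0 (hammingDist x y) := by
        simp only [kraw_zero, sum_const, nsmul_one]; ring
    _ ≤ ∑ i ∈ range n, c (i + 1) * ∑ x ∈ C, ∑ y ∈ C, kraw n q (i + 1) (hammingDist x y)
          + c 0 * ∑ x ∈ C, ∑ y ∈ C, kraw n q 0 (hammingDist x y) :=
        le_add_of_nonneg_left <| sum_nonneg fun i hi => mul_nonneg (hc _ (Nat.le_add_left 1 i)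
          (mem_range.mp hi)) (sum_sum_kraw_hammingDist_nonneg (mem_range.mp hi) C)
    _ = ∑ i ∈ range (n + 1), c i * ∑ x ∈ C, ∑ y ∈ C, kraw n q i (hammingDist x y) := by
        rw [sum_range_succ']
    _ = _ := by
        simp_rw [mul_sum]
        rw [sum_comm]
        exact sum_congr rfl fun x _ => sum_comm

theorem LP_bound_for_codes_general (n q d : ℕ) (hq : 2 ≤ q)
    (f : ℝ → ℝ) (c : ℕ → ℝ)
    (hf : ∀ z : ℝ, f z = ∑ i ∈ Finset.range (n + 1), c i * kraw n q i z)
    (hA1a : 0 < c 0) (hA1b : ∀ i : ℕ, 1 ≤ i → i ≤ n → 0 ≤ c i)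
    (hA2a : 0 < f 0) (hA2b : ∀ i : ℕ, d ≤ i → i ≤ n → f i ≤ 0)
    (C : Finset (Fin n → Fin q))
    (hdist : ∀ x ∈ C, ∀ y ∈ C, x ≠ y → d ≤ hammingDist x y) :
    (C.card : ℝ) ≤ f 0 / c 0 := by
  have : NeZero q := ⟨by omega⟩
  have hlower := mul_card_sq_le_sum_sum_sum_kraw hA1b C
  simp_rw [← hf] at hlower
  have hdelsarte : c 0 * #C ^ 2 ≤ #C * f 0 := hlower.trans (sum_sum_hammingDist_le hA2b hdist)
  rw [le_div_iff₀ hA1a]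
  nlinarith

theorem LP_bound_for_codes (n q d : ℕ) (hn : 1 ≤ n) (hq : 2 ≤ q)
    (hd1 : 1 ≤ d) (hdn : d ≤ n)
    (f : ℝ → ℝ) (c : ℕ → ℝ)
    (hf : ∀ z : ℝ, f z = ∑ i ∈ Finset.range (n + 1), c i * kraw n q i z)
    (hA1a : 0 < c 0) (hA1b : ∀ i : ℕ, 1 ≤ i → i ≤ n → 0 ≤ c i)
    (hA2a : 0 < f 0) (hA2b : ∀ i : ℕ, d ≤ i → i ≤ n → f i ≤ 0)
    (C : Finset (Fin n → Fin q))
    (hdist : ∀ x ∈ C, ∀ y ∈ C, x ≠ y → d ≤ hammingDist x y) :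
    (C.card : ℝ) ≤ f 0 / c 0 :=
  LP_bound_for_codes_general n q d hq f c hf hA1a hA1b hA2a hA2b C hdist
end

section
/- Duality of LP polynomials: a real polynomial f of degree at most n satisfies conditions (A1): f_0 > 0 and f_i ≥ 0 for i=1,...,n, and (A2): f(0) > 0 and f(i) ≤ 0 for i=d,...,n, if and only if its dual polynomial f̂ satisfies (B1): f̂_0 > 0 and f̂_i ≤ 0 for i = d,...,n, and (B2): f̂(0) > 0 and f̂(i) ≥ 0 for i = 1,...,n. Moreover (f(0)/f_0)·(f̂(0)/f̂_0) = q^n. -/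
open Finset

/-! The Krawtchouk values `Kᵢ(m)` are the coefficients of
`Q_m(X) = (1 - X)^m (1 + (q - 1) X)^(n - m)`. Evaluating the homogenization of `Q_j` at
`(1 - X, 1 + (q - 1) X)` gives `∑ₖ Kₖ(j) Q_k = (q X)^j q^(n - j)`, i.e. the orthogonality
`∑ₖ Kᵢ(k) Kₖ(j) = qⁿ δᵢⱼ`. Hence `f̂(i) = q^(n/2) fᵢ` while `f̂ᵢ = q^(-n/2) f(i)`: every sign
condition on `f` is a sign condition on `f̂` up to a positive factor, and the two ratios multiply
to `q^(n/2) · q^(n/2)`. -/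

open Polynomial

theorem realChoose_natCast_s9 (m j : ℕ) : realChoose m j = m.choose j := by
  rw [realChoose, ← descPochhammer_eval_eq_prod_range, descPochhammer_eval_eq_descFactorial,
    Nat.descFactorial_eq_factorial_mul_choose, Nat.cast_mul,
    mul_div_cancel_left₀ _ (Nat.cast_ne_zero.mpr j.factorial_ne_zero)]

namespace Polynomial

variable {R : Type*} [CommSemiring R]

theorem coeff_one_add_C_mul_X_pow (a : R) (N k : ℕ) :
    ((1 + C a * X) ^ N).coeff k = a ^ k * N.choose k := by
  have hterm (t : ℕ) : (C a * X) ^ t * 1 ^ (N - t) * (N.choose t : R[X]) =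
      C (a ^ t * N.choose t) * X ^ t := by
    rw [one_pow, mul_one, mul_pow, C_mul, C_pow, C_eq_natCast]
    ring
  simp only [add_comm (1 : R[X]), add_pow, finsetSum_coeff, hterm, coeff_C_mul_X_pow,
    Finset.sum_ite_eq, Finset.mem_range]
  split_ifs with hk
  · rfl
  · rw [Nat.choose_eq_zero_of_lt (by omega), Nat.cast_zero, mul_zero]

theorem coeff_X_pow_mul_one_add_C_mul_X_pow_sub (a : R) {n t i : ℕ} (ht : t ≤ n) (hi : i ≤ n) :
    (X ^ t * (1 + C a * X) ^ (n - t)).coeff i = a ^ (i - t) * (n - t).choose (n - i) := by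
  rw [coeff_X_pow_mul', coeff_one_add_C_mul_X_pow]
  split_ifs with hti
  · rw [Nat.choose_symm_of_eq_add (show n - t = (i - t) + (n - i) by omega)]
  · rw [Nat.choose_eq_zero_of_lt (by omega), Nat.cast_zero, mul_zero]

theorem homogenize_pow (p : R[X]) {m : ℕ} (hp : p.natDegree ≤ m) (k : ℕ) :
    homogenize (p ^ k) (k * m) = homogenize p m ^ k := by
  induction k with
  | zero => simp
  | succ k ih =>
    rw [pow_succ, Nat.succ_mul, homogenize_mul _ _ (natDegree_pow_le_of_le k hp) hp, ih, pow_succ]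

theorem aeval_homogenize {A : Type*} [CommSemiring A] [Algebra R A] (p : R[X]) (n : ℕ)
    (x : Fin 2 → A) :
    MvPolynomial.aeval x (p.homogenize n) =
      ∑ k ∈ Finset.range (n + 1), algebraMap R A (p.coeff k) * x 0 ^ k * x 1 ^ (n - k) := by
  simp only [homogenize, map_sum, Finset.Nat.sum_antidiagonal_eq_sum_range_succ_mk,
    MvPolynomial.aeval_monomial]
  refine Finset.sum_congr rfl fun k hk ↦ ?_
  rw [Finsupp.update_eq_add_single, Finsupp.prod_add_index', Finsupp.prod_single_index,
    Finsupp.prod_single_index]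
  · ring
  all_goals simp_all [pow_add]

end Polynomial

noncomputable def krawGenPoly (n q m : ℕ) : ℝ[X] :=
  (1 - X) ^ m * (1 + C ((q : ℝ) - 1) * X) ^ (n - m)

theorem coeff_krawGenPoly {n q m i : ℕ} (hm : m ≤ n) (hi : i ≤ n) :
    (krawGenPoly n q m).coeff i = kraw n q i m := by
  set B : ℝ[X] := 1 + C ((q : ℝ) - 1) * X
  set g : ℕ → ℝ := fun t ↦ (-(q : ℝ)) ^ t * m.choose t * (((q : ℝ) - 1) ^ (i - t) *
    (n - t).choose (n - i))
  have hexpand : krawGenPoly n q m = ∑ t ∈ Finset.range (m + 1),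
      C ((-(q : ℝ)) ^ t * m.choose t) * (X ^ t * B ^ (n - t)) := by
    have h1X : (1 - X : ℝ[X]) = C (-(q : ℝ)) * X + B := by
      simp only [B, C_neg, C_sub, C_1, map_natCast]; ring
    rw [krawGenPoly, h1X, add_pow, Finset.sum_mul]
    refine Finset.sum_congr rfl fun t ht ↦ ?_
    rw [show n - t = (m - t) + (n - m) by simp at ht; omega, pow_add, mul_pow, C_mul, C_pow,
      C_eq_natCast]
    ring
  have hcoeff : (krawGenPoly n q m).coeff i = ∑ t ∈ Finset.range (n + 1), g t := by
    rw [hexpand, finsetSum_coeff,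
      ← Finset.sum_subset (Finset.range_subset_range.mpr (by omega : m + 1 ≤ n + 1))]
    · refine Finset.sum_congr rfl fun t ht ↦ ?_
      rw [coeff_C_mul, coeff_X_pow_mul_one_add_C_mul_X_pow_sub _ (by simp at ht; omega) hi]
    · intro t _ ht
      simp only [Finset.mem_range, not_lt] at ht
      simp [g, Nat.choose_eq_zero_of_lt (by omega : m < t)]
  rw [hcoeff, kraw,
    ← Finset.sum_subset (Finset.range_subset_range.mpr (by omega : i + 1 ≤ n + 1))]
  · refine Finset.sum_congr rfl fun t _ ↦ ?_
    rw [realChoose_natCast_s9, neg_pow]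
    ring
  · intro t htn ht
    simp only [Finset.mem_range, not_lt] at htn ht
    simp [g, Nat.choose_eq_zero_of_lt (by omega : n - t < n - i)]

theorem homogenize_krawGenPoly {n q m : ℕ} (hm : m ≤ n) :
    (krawGenPoly n q m).homogenize n = (MvPolynomial.X 1 - MvPolynomial.X 0) ^ m *
      (MvPolynomial.X 1 + MvPolynomial.C ((q : ℝ) - 1) * MvPolynomial.X 0) ^ (n - m) := by
  have hA : (1 - X : ℝ[X]).natDegree ≤ 1 := by compute_degree
  have hB : (1 + C ((q : ℝ) - 1) * X).natDegree ≤ 1 := by compute_degree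
  have h := homogenize_mul _ _ (natDegree_pow_le_of_le m hA) (natDegree_pow_le_of_le (n - m) hB)
  rw [homogenize_pow _ hA, homogenize_pow _ hB, show m * 1 + (n - m) * 1 = n by omega] at h
  simpa only [krawGenPoly, homogenize_sub, homogenize_add, homogenize_one, homogenize_C_mul,
    homogenize_X one_ne_zero, Nat.sub_self, pow_zero, pow_one, mul_one] using h

theorem sum_kraw_mul_krawGenPoly {n q j : ℕ} (hj : j ≤ n) :
    ∑ k ∈ Finset.range (n + 1), C (kraw n q k j) * krawGenPoly n q k =
      C ((q : ℝ) ^ n) * X ^ j := by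
  set B : ℝ[X] := 1 + C ((q : ℝ) - 1) * X
  have h := aeval_homogenize (krawGenPoly n q j) n ![1 - X, B]
  rw [homogenize_krawGenPoly hj] at h
  calc ∑ k ∈ Finset.range (n + 1), C (kraw n q k j) * krawGenPoly n q k
      = ∑ k ∈ Finset.range (n + 1),
          algebraMap ℝ ℝ[X] ((krawGenPoly n q j).coeff k) * (1 - X) ^ k * B ^ (n - k) := by
        refine Finset.sum_congr rfl fun k hk ↦ ?_
        rw [coeff_krawGenPoly hj (by simpa [Nat.lt_succ_iff] using hk), algebraMap_eq, mul_assoc,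
          krawGenPoly]
    _ = (B - (1 - X)) ^ j * (B + C ((q : ℝ) - 1) * (1 - X)) ^ (n - j) := by
        simpa [MvPolynomial.aeval_X, MvPolynomial.aeval_C] using h.symm
    _ = C ((q : ℝ) ^ n) * X ^ j := by
        rw [show B - (1 - X) = C (q : ℝ) * X by simp [B]; ring,
          show B + C ((q : ℝ) - 1) * (1 - X) = C (q : ℝ) by simp [B]; ring,
          mul_pow, mul_right_comm, ← pow_add, Nat.add_sub_cancel' hj, C_pow]

theorem sum_kraw_mul_kraw {n q i j : ℕ} (hi : i ≤ n) (hj : j ≤ n) :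
    ∑ k ∈ Finset.range (n + 1), kraw n q i k * kraw n q k j =
      if i = j then (q : ℝ) ^ n else 0 := by
  have h := congrArg (coeff · i) (sum_kraw_mul_krawGenPoly (q := q) hj)
  simp only [finsetSum_coeff, coeff_C_mul, coeff_X_pow, mul_ite, mul_one, mul_zero] at h
  rw [← h]
  refine Finset.sum_congr rfl fun k hk ↦ ?_
  rw [coeff_krawGenPoly (by simpa [Nat.lt_succ_iff] using hk) hi, mul_comm]

theorem sum_mul_kraw_eq_of_eq_sum_kraw {n q i : ℕ} {f : ℝ → ℝ} {c : ℕ → ℝ}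
    (hf : ∀ z, f z = ∑ m ∈ Finset.range (n + 1), c m * kraw n q m z) (hi : i ≤ n) :
    ∑ j ∈ Finset.range (n + 1), f j * kraw n q j i = (q : ℝ) ^ n * c i := by
  calc ∑ j ∈ Finset.range (n + 1), f j * kraw n q j i
      = ∑ m ∈ Finset.range (n + 1),
          c m * ∑ j ∈ Finset.range (n + 1), kraw n q m j * kraw n q j i := by
        simp only [hf, Finset.sum_mul, Finset.mul_sum, mul_assoc]
        exact Finset.sum_comm
    _ = ∑ m ∈ Finset.range (n + 1), c m * if m = i then (q : ℝ) ^ n else 0 :=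
        Finset.sum_congr rfl fun m hm ↦ by
          rw [sum_kraw_mul_kraw (by simpa [Nat.lt_succ_iff] using hm) hi]
    _ = (q : ℝ) ^ n * c i := by
        simp [Nat.lt_succ_iff.mpr hi, mul_comm]

theorem LP_duality_general (n q d : ℕ) (hq : 2 ≤ q)
    (f : ℝ → ℝ) (c : ℕ → ℝ)
    (hf : ∀ z : ℝ, f z = ∑ i ∈ Finset.range (n + 1), c i * kraw n q i z)
    -- the dual polynomial `f̂(z) = q^{-n/2} ∑_{j=0}^n f(j) K_j^{(n,q)}(z)`
    (fhat : ℝ → ℝ) (chat : ℕ → ℝ)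
    (hfhat : ∀ z : ℝ, fhat z =
      (Real.sqrt ((q : ℝ) ^ n))⁻¹ * ∑ j ∈ Finset.range (n + 1), f j * kraw n q j z)
    -- the Krawtchouk expansion coefficients of the dual polynomial
    (hchat : ∀ j : ℕ, j ≤ n → chat j = (Real.sqrt ((q : ℝ) ^ n))⁻¹ * f j) :
    (((0 < c 0 ∧ ∀ i : ℕ, 1 ≤ i → i ≤ n → 0 ≤ c i) ∧
        (0 < f 0 ∧ ∀ i : ℕ, d ≤ i → i ≤ n → f i ≤ 0)) ↔
      ((0 < chat 0 ∧ ∀ i : ℕ, d ≤ i → i ≤ n → chat i ≤ 0) ∧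
        (0 < fhat 0 ∧ ∀ i : ℕ, 1 ≤ i → i ≤ n → 0 ≤ fhat i))) ∧
    (((0 < c 0 ∧ ∀ i : ℕ, 1 ≤ i → i ≤ n → 0 ≤ c i) ∧
        (0 < f 0 ∧ ∀ i : ℕ, d ≤ i → i ≤ n → f i ≤ 0)) →
      (f 0 / c 0) * (fhat 0 / chat 0) = (q : ℝ) ^ n) := by
  set s := Real.sqrt ((q : ℝ) ^ n)
  have hss : s * s = (q : ℝ) ^ n := Real.mul_self_sqrt (by positivity)
  have hs : 0 < s := Real.sqrt_pos.mpr (by positivity)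
  have hfhat_nat (i : ℕ) (hi : i ≤ n) : fhat i = s * c i := by
    rw [hfhat, sum_mul_kraw_eq_of_eq_sum_kraw hf hi, ← hss]
    field_simp
  have hfhat0 : fhat 0 = s * c 0 := by simpa using hfhat_nat 0 n.zero_le
  have hchat0 : chat 0 = s⁻¹ * f 0 := by simpa using hchat 0 n.zero_le
  have hc_iff_fhat : (0 < c 0 ∧ ∀ i : ℕ, 1 ≤ i → i ≤ n → 0 ≤ c i) ↔
      (0 < fhat 0 ∧ ∀ i : ℕ, 1 ≤ i → i ≤ n → 0 ≤ fhat i) :=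
    and_congr (by rw [hfhat0, mul_pos_iff_of_pos_left hs]) <|
      forall₂_congr fun i _ ↦ imp_congr_right fun hi ↦ by
        rw [hfhat_nat i hi, mul_nonneg_iff_of_pos_left hs]
  have hf_iff_chat : (0 < f 0 ∧ ∀ i : ℕ, d ≤ i → i ≤ n → f i ≤ 0) ↔
      (0 < chat 0 ∧ ∀ i : ℕ, d ≤ i → i ≤ n → chat i ≤ 0) :=
    and_congr (by rw [hchat0, mul_pos_iff_of_pos_left (inv_pos.mpr hs)]) <|
      forall₂_congr fun i _ ↦ imp_congr_right fun hi ↦ by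
        rw [hchat i hi, ← not_lt, ← not_lt, mul_pos_iff_of_pos_left (inv_pos.mpr hs)]
  refine ⟨by rw [hc_iff_fhat, hf_iff_chat, and_comm], fun ⟨⟨hc0, _⟩, hf0, _⟩ ↦ ?_⟩
  rw [hfhat0, hchat0, ← hss]
  field_simp

theorem LP_duality (n q d : ℕ) (hn : 1 ≤ n) (hq : 2 ≤ q) (hd1 : 1 ≤ d) (hdn : d ≤ n)
    (f : ℝ → ℝ) (c : ℕ → ℝ)
    (hf : ∀ z : ℝ, f z = ∑ i ∈ Finset.range (n + 1), c i * kraw n q i z)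
    -- the dual polynomial `f̂(z) = q^{-n/2} ∑_{j=0}^n f(j) K_j^{(n,q)}(z)`
    (fhat : ℝ → ℝ) (chat : ℕ → ℝ)
    (hfhat : ∀ z : ℝ, fhat z =
      (Real.sqrt ((q : ℝ) ^ n))⁻¹ * ∑ j ∈ Finset.range (n + 1), f j * kraw n q j z)
    -- the Krawtchouk expansion coefficients of the dual polynomial
    (hchat : ∀ j : ℕ, j ≤ n → chat j = (Real.sqrt ((q : ℝ) ^ n))⁻¹ * f j) :
    (((0 < c 0 ∧ ∀ i : ℕ, 1 ≤ i → i ≤ n → 0 ≤ c i) ∧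
        (0 < f 0 ∧ ∀ i : ℕ, d ≤ i → i ≤ n → f i ≤ 0)) ↔
      ((0 < chat 0 ∧ ∀ i : ℕ, d ≤ i → i ≤ n → chat i ≤ 0) ∧
        (0 < fhat 0 ∧ ∀ i : ℕ, 1 ≤ i → i ≤ n → 0 ≤ fhat i))) ∧
    (((0 < c 0 ∧ ∀ i : ℕ, 1 ≤ i → i ≤ n → 0 ≤ c i) ∧
        (0 < f 0 ∧ ∀ i : ℕ, d ≤ i → i ≤ n → f i ≤ 0)) →
      (f 0 / c 0) * (fhat 0 / chat 0) = (q : ℝ) ^ n) :=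
  LP_duality_general n q d hq f c hf fhat chat hfhat hchat
end

section
/- LP bound for spherical code energy: let n ≥ 2, M ≥ 2, h : [-1,1] → [0,∞], and f a real polynomial with f(t) ≤ h(t) for all t ∈ [-1,1] and Gegenbauer expansion f = Σ f_i P_i^{(n)} with f_0 > 0 and f_i ≥ 0 for all i ≥ 1. Then every M-point set C ⊂ S^{n-1} has h-energy E_h(C) = Σ_{x≠y∈C} h(⟨x,y⟩) ≥ M(f_0 M - f(1)). -/
/-!
The LP bound only needs each Gegenbauer kernel `P_i(⟨x, y⟩)` to be positive semidefinite on the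
sphere: summing `f = ∑ c_i P_i` over all pairs then gives at least `c_0 M²`, the diagonal
contributes `M f(1)`, and `f ≤ h` off the diagonal.

For positive semidefiniteness, run the Gegenbauer recurrence on polynomials, with `t` replaced by
`⟨z, x⟩` and `1` by `|x|²`. The result `Z_z` is homogeneous of degree `i`, equals `P_i(⟨z, ·⟩)` on
the sphere, is harmonic (by induction, together with `∂_z Z_{z,i} = i Z_{z,i-1}`), and is congruent
to `a_i ⟨z, x⟩^i` modulo `|x|²` with `a_i > 0`. For the Fischer inner product
`⟨p, q⟩ = ∑_d d! p_d q_d` multiplication by `x_j` is adjoint to `∂_j`; hence `|x|² W` is orthogonal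
to harmonic polynomials and `⟨⟨y, x⟩^i, q⟩ = i! q(y)` for `q` homogeneous of degree `i`. So
`⟨Z_y, Z_z⟩ = a_i i! P_i(⟨y, z⟩)` is a Gram matrix.
-/

open Finset

/-- The Gegenbauer polynomials `P_i^{(n)}(t)` normalized by `P_i^{(n)}(1) = 1`,
defined by the recurrence `(i+n-2) P_{i+1} = (2i+n-2) t P_i - i P_{i-1}`. -/
noncomputable def geg (n : ℕ) : ℕ → ℝ → ℝ
  | 0, _ => 1
  | 1, t => t
  | (i + 2), t =>
      ((2 * ((i : ℝ) + 1) + (n : ℝ) - 2) * t * geg n (i + 1) t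
        - ((i : ℝ) + 1) * geg n i t) / (((i : ℝ) + 1) + (n : ℝ) - 2)

lemma add_one_add_sub_two_pos {n : ℕ} (hn : 2 ≤ n) (i : ℕ) : 0 < (i : ℝ) + 1 + n - 2 := by
  have : (2 : ℝ) ≤ n := by exact_mod_cast hn
  have : (0 : ℝ) ≤ i := i.cast_nonneg
  linarith

namespace MvPolynomial

variable {σ R : Type*} [Fintype σ]

section CommSemiring

variable [CommSemiring R]

def factorialWeight (d : σ →₀ ℕ) : R := ∏ j, ((d j).factorial : R)

lemma factorialWeight_add_single [DecidableEq σ] (d : σ →₀ ℕ) (j : σ) :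
    (factorialWeight (d + Finsupp.single j 1) : R) = (d j + 1) * factorialWeight d := by
  have hpt : ∀ k, (((d + Finsupp.single j 1 : σ →₀ ℕ) k).factorial : R)
      = (if k = j then (d j + 1 : R) else 1) * (d k).factorial := by
    intro k
    by_cases hk : k = j
    · subst hk; simp [Nat.factorial_succ]
    · simp [hk]
  simp only [factorialWeight, hpt, prod_mul_distrib, prod_ite_eq', mem_univ, if_true]

lemma sum_factorialWeight_mul_coeff_eq_of_support_subset {p : MvPolynomial σ R}
    {s : Finset (σ →₀ ℕ)} (hs : p.support ⊆ s) (q : MvPolynomial σ R) :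
    ∑ d ∈ p.support, factorialWeight d * coeff d p * coeff d q
      = ∑ d ∈ s, factorialWeight d * coeff d p * coeff d q :=
  Finset.sum_subset hs fun d _ hd => by rw [notMem_support_iff.mp hd]; ring

noncomputable def fischer : MvPolynomial σ R →ₗ[R] MvPolynomial σ R →ₗ[R] R :=
  LinearMap.mk₂ R (fun p q => ∑ d ∈ p.support, factorialWeight d * coeff d p * coeff d q)
    (fun p p' q => by
      classical
      rw [sum_factorialWeight_mul_coeff_eq_of_support_subset support_add,
        sum_factorialWeight_mul_coeff_eq_of_support_subset (subset_union_left (s₂ := p'.support)),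
        sum_factorialWeight_mul_coeff_eq_of_support_subset (subset_union_right (s₁ := p.support))]
      simp only [coeff_add, mul_add, add_mul, sum_add_distrib])
    (fun c p q => by
      rw [sum_factorialWeight_mul_coeff_eq_of_support_subset support_smul]
      simp only [coeff_smul, smul_eq_mul, mul_sum]
      exact Finset.sum_congr rfl fun _ _ => by ring)
    (fun p q q' => by simp only [coeff_add, mul_add, sum_add_distrib])
    (fun c p q => by
      simp only [coeff_smul, smul_eq_mul, mul_sum]
      exact Finset.sum_congr rfl fun _ _ => by ring)

lemma fischer_apply (p q : MvPolynomial σ R) :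
    fischer p q = ∑ d ∈ p.support, factorialWeight d * coeff d p * coeff d q := rfl

lemma fischer_monomial (d : σ →₀ ℕ) (a : R) (q : MvPolynomial σ R) :
    fischer (monomial d a) q = factorialWeight d * a * coeff d q := by
  classical
  rw [fischer_apply, sum_factorialWeight_mul_coeff_eq_of_support_subset support_monomial_subset,
    sum_singleton, coeff_monomial, if_pos rfl]

lemma fischer_X_mul (j : σ) (p q : MvPolynomial σ R) :
    fischer (X j * p) q = fischer p (pderiv j q) := by
  classical
  induction p using MvPolynomial.induction_on' with
  | monomial d a =>
    rw [X, monomial_mul, one_mul, fischer_monomial, fischer_monomial, coeff_pderiv, add_comm _ d,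
      factorialWeight_add_single]
    ring
  | add p p' hp hp' => simp only [mul_add, map_add, LinearMap.add_apply, hp, hp']

lemma fischer_one (q : MvPolynomial σ R) : fischer 1 q = coeff 0 q := by
  rw [one_def, fischer_monomial]; simp [factorialWeight]

end CommSemiring

section CommRing

variable [CommRing R]

lemma fischer_self_nonneg [LinearOrder R] [IsStrictOrderedRing R] (p : MvPolynomial σ R) :
    0 ≤ fischer p p :=
  Finset.sum_nonneg fun d _ => by
    have : (0 : R) ≤ factorialWeight d := Finset.prod_nonneg fun _ _ => Nat.cast_nonneg _
    simpa [mul_assoc] using mul_nonneg this (mul_self_nonneg (coeff d p))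

noncomputable def linearForm (y : σ → R) : MvPolynomial σ R := ∑ j, C (y j) * X j

noncomputable def sumSq : MvPolynomial σ R := ∑ j, X j ^ 2

noncomputable def dirDeriv (y : σ → R) : Derivation R (MvPolynomial σ R) (MvPolynomial σ R) :=
  ∑ j, y j • pderiv j

noncomputable def laplacian : MvPolynomial σ R →ₗ[R] MvPolynomial σ R :=
  ∑ j, (pderiv j).toLinearMap ∘ₗ (pderiv j).toLinearMap

variable {p : MvPolynomial σ R} {m : ℕ}

lemma dirDeriv_apply (y : σ → R) (p : MvPolynomial σ R) :
    dirDeriv y p = ∑ j, C (y j) * pderiv j p := by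
  rw [dirDeriv, ← Derivation.coeFnAddMonoidHom_apply, map_sum, Finset.sum_apply]
  simp [C_mul']

lemma laplacian_apply (p : MvPolynomial σ R) : laplacian p = ∑ j, pderiv j (pderiv j p) := by
  simp [laplacian]

lemma dirDeriv_C_mul (y : σ → R) (a : R) (p : MvPolynomial σ R) :
    dirDeriv y (C a * p) = C a * dirDeriv y p := by
  rw [C_mul', Derivation.map_smul, C_mul']

lemma laplacian_C_mul (a : R) (p : MvPolynomial σ R) :
    laplacian (C a * p) = C a * laplacian p := by
  rw [C_mul', map_smul, C_mul']

lemma pderiv_linearForm (y : σ → R) (j : σ) : pderiv j (linearForm y) = C (y j) := by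
  classical
  simp [linearForm, pderiv_X, Pi.single_apply]

lemma pderiv_sumSq (j : σ) : pderiv j (sumSq : MvPolynomial σ R) = 2 * X j := by
  classical
  simp [sumSq, pderiv_X, Pi.single_apply]

lemma eval_linearForm (y x : σ → R) : eval x (linearForm y) = y ⬝ᵥ x := by
  simp [linearForm, dotProduct]

lemma eval_sumSq (x : σ → R) : eval x (sumSq : MvPolynomial σ R) = x ⬝ᵥ x := by
  simp [sumSq, dotProduct, sq]

lemma dirDeriv_linearForm (y z : σ → R) : dirDeriv y (linearForm z) = C (y ⬝ᵥ z) := by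
  simp [dirDeriv_apply, pderiv_linearForm, dotProduct]

lemma dirDeriv_sumSq (y : σ → R) : dirDeriv y (sumSq : MvPolynomial σ R) = 2 * linearForm y := by
  simp only [dirDeriv_apply, pderiv_sumSq, linearForm, mul_sum]
  exact sum_congr rfl fun _ _ => by ring

lemma laplacian_linearForm_mul (y : σ → R) (p : MvPolynomial σ R) :
    laplacian (linearForm y * p) = linearForm y * laplacian p + 2 * dirDeriv y p := by
  simp only [laplacian_apply, dirDeriv_apply, pderiv_mul, map_add, pderiv_linearForm,
    pderiv_C, mul_sum, ← sum_add_distrib]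
  exact sum_congr rfl fun _ _ => by ring

lemma laplacian_sumSq_mul (hp : p.IsHomogeneous m) :
    laplacian (sumSq * p) = sumSq * laplacian p
      + (2 * (Fintype.card σ : MvPolynomial σ R) + 4 * (m : MvPolynomial σ R)) * p := by
  have hj : ∀ j, pderiv j (pderiv j (sumSq * p))
      = 2 * p + 4 * (X j * pderiv j p) + sumSq * pderiv j (pderiv j p) := fun j => by
    simp only [pderiv_mul, pderiv_sumSq, two_mul, add_mul, map_add, pderiv_X_self]
    ring
  rw [laplacian_apply, laplacian_apply]
  simp only [hj, sum_add_distrib, ← mul_sum, hp.sum_X_mul_pderiv, sum_const, card_univ,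
    nsmul_eq_mul]
  ring

lemma isHomogeneous_linearForm (y : σ → R) : (linearForm y).IsHomogeneous 1 :=
  IsHomogeneous.sum _ _ _ fun j _ => isHomogeneous_C_mul_X (y j) j

lemma isHomogeneous_sumSq : (sumSq : MvPolynomial σ R).IsHomogeneous 2 :=
  IsHomogeneous.sum _ _ _ fun j _ => isHomogeneous_X_pow j 2

lemma IsHomogeneous.dirDeriv (hp : p.IsHomogeneous m) (y : σ → R) :
    (dirDeriv y p).IsHomogeneous (m - 1) := by
  rw [dirDeriv_apply]
  exact IsHomogeneous.sum _ _ _ fun j _ => hp.pderiv.C_mul (y j)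

lemma eval_dirDeriv_self (hp : p.IsHomogeneous m) (y : σ → R) :
    eval y (dirDeriv y p) = m * eval y p := by
  simpa [dirDeriv_apply, mul_comm] using congrArg (eval y) hp.sum_X_mul_pderiv

lemma fischer_linearForm_mul (y : σ → R) (p q : MvPolynomial σ R) :
    fischer (linearForm y * p) q = fischer p (dirDeriv y q) := by
  simp only [linearForm, dirDeriv_apply, sum_mul, map_sum, LinearMap.sum_apply,
    C_mul', smul_mul_assoc, map_smul, LinearMap.smul_apply, fischer_X_mul]

lemma fischer_sumSq_mul (p q : MvPolynomial σ R) :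
    fischer (sumSq * p) q = fischer p (laplacian q) := by
  simp only [sumSq, laplacian_apply, sum_mul, map_sum, LinearMap.sum_apply,
    sq, mul_assoc, fischer_X_mul]

lemma fischer_linearForm_pow (y : σ → R) {q : MvPolynomial σ R} (hq : q.IsHomogeneous m) :
    fischer (linearForm y ^ m) q = m.factorial * eval y q := by
  induction m generalizing q with
  | zero =>
    rw [← totalDegree_zero_iff_isHomogeneous, totalDegree_eq_zero_iff_eq_C] at hq
    rw [pow_zero, fischer_one, hq]
    simp
  | succ m ih =>
    rw [pow_succ', fischer_linearForm_mul, ih (hq.dirDeriv y), eval_dirDeriv_self hq,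
      Nat.factorial_succ]
    push_cast
    ring

end CommRing

section Zonal

variable {y z : σ → ℝ}

/-- The zonal harmonic `x ↦ |x|^i P_i(⟨z, x⟩ / |x|)`, built by the recurrence defining `geg`. -/
noncomputable def zonal (z : σ → ℝ) : ℕ → MvPolynomial σ ℝ
  | 0 => 1
  | 1 => linearForm z
  | (i + 2) => C ((((i : ℝ) + 1) + Fintype.card σ - 2)⁻¹) *
      (C (2 * ((i : ℝ) + 1) + Fintype.card σ - 2) * (linearForm z * zonal z (i + 1))
        - C ((i : ℝ) + 1) * (sumSq * zonal z i))

lemma eval_zonal (hy : y ⬝ᵥ y = 1) (z : σ → ℝ) :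
    ∀ i, eval y (zonal z i) = geg (Fintype.card σ) i (z ⬝ᵥ y)
  | 0 => by simp [zonal, geg]
  | 1 => by simp [zonal, geg, eval_linearForm]
  | i + 2 => by
    simp only [zonal, geg, eval_mul, eval_sub, eval_C, eval_linearForm, eval_sumSq, hy,
      eval_zonal hy z (i + 1), eval_zonal hy z i]
    ring

lemma isHomogeneous_zonal (z : σ → ℝ) : ∀ i, (zonal z i).IsHomogeneous i
  | 0 => isHomogeneous_one _ _
  | 1 => isHomogeneous_linearForm z
  | i + 2 => by
    have h₁ := (isHomogeneous_linearForm z).mul (isHomogeneous_zonal z (i + 1))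
    have h₂ := isHomogeneous_sumSq.mul (isHomogeneous_zonal z i)
    rw [show 1 + (i + 1) = i + 2 by omega] at h₁
    rw [show 2 + i = i + 2 by omega] at h₂
    exact ((h₁.C_mul _).sub (h₂.C_mul _)).C_mul _

/-- At `i = 0` the junk term `zonal z (0 - 1)` comes with the factor `0`. -/
lemma zonal_succ (hn : 2 ≤ Fintype.card σ) (z : σ → ℝ) (i : ℕ) :
    C ((i : ℝ) + Fintype.card σ - 2) * zonal z (i + 1)
      = C (2 * (i : ℝ) + Fintype.card σ - 2) * (linearForm z * zonal z i)
        - C (i : ℝ) * (sumSq * zonal z (i - 1)) := by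
  rcases i with _ | i
  · simp [zonal]
  · rw [zonal, Nat.add_sub_cancel, ← mul_assoc, ← C_mul]
    push_cast
    rw [mul_inv_cancel₀ (add_one_add_sub_two_pos hn i).ne', C_1, one_mul]

lemma dirDeriv_zonal (hn : 2 ≤ Fintype.card σ) (hz : z ⬝ᵥ z = 1) :
    ∀ i, dirDeriv z (zonal z i) = C (i : ℝ) * zonal z (i - 1)
  | 0 => by simp [zonal]
  | 1 => by simp [zonal, dirDeriv_linearForm, hz]
  | i + 2 => by
    show _ = _ * zonal z (i + 1)
    have hD := congrArg (dirDeriv z) (zonal_succ hn z (i + 1))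
    have hrec := zonal_succ hn z i
    simp only [Derivation.map_sub, dirDeriv_C_mul] at hD
    simp only [Derivation.leibniz, smul_eq_mul, dirDeriv_linearForm,
      dirDeriv_sumSq, hz, dirDeriv_zonal hn hz (i + 1), dirDeriv_zonal hn hz i,
      Nat.add_sub_cancel] at hD
    -- the `sumSq * zonal z (i - 1)` term is eliminated with the recurrence at `i`
    apply mul_left_cancel₀ (C_ne_zero.2 (add_one_add_sub_two_pos hn i).ne')
    simp only [map_add, map_sub, map_mul, map_natCast, map_one, map_ofNat, Nat.cast_add,
      Nat.cast_one, Nat.cast_ofNat] at hD hrec ⊢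
    linear_combination hD - ((i : MvPolynomial σ ℝ) + 1) * hrec

lemma laplacian_zonal (hn : 2 ≤ Fintype.card σ) (hz : z ⬝ᵥ z = 1) :
    ∀ i, laplacian (zonal z i) = 0
  | 0 => by simp [zonal, laplacian_apply]
  | 1 => by simp [zonal, laplacian_apply, pderiv_linearForm]
  | i + 2 => by
    have h := congrArg laplacian (zonal_succ hn z (i + 1))
    simp only [LinearMap.map_sub, laplacian_C_mul, laplacian_linearForm_mul,
      laplacian_sumSq_mul (isHomogeneous_zonal z i), laplacian_zonal hn hz (i + 1),
      laplacian_zonal hn hz i, dirDeriv_zonal hn hz (i + 1), Nat.add_sub_cancel] at h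
    refine (mul_eq_zero.1 ?_).resolve_left (C_ne_zero.2 (add_one_add_sub_two_pos hn i).ne')
    simp only [map_add, map_sub, map_mul, map_natCast, map_one, map_ofNat, Nat.cast_add,
      Nat.cast_one] at h ⊢
    linear_combination h

noncomputable def zonalLead (n : ℕ) : ℕ → ℝ
  | 0 => 1
  | 1 => 1
  | (i + 2) => (2 * ((i : ℝ) + 1) + n - 2) / (((i : ℝ) + 1) + n - 2) * zonalLead n (i + 1)

lemma zonalLead_pos {n : ℕ} (hn : 2 ≤ n) : ∀ i, 0 < zonalLead n i
  | 0 => one_pos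
  | 1 => one_pos
  | i + 2 => by
    have hden := add_one_add_sub_two_pos hn i
    exact mul_pos (div_pos (by linarith) hden) (zonalLead_pos hn (i + 1))

lemma exists_zonal_eq (z : σ → ℝ) :
    ∀ i, ∃ W, zonal z i = C (zonalLead (Fintype.card σ) i) * linearForm z ^ i + sumSq * W
  | 0 => ⟨0, by simp [zonal, zonalLead]⟩
  | 1 => ⟨0, by simp [zonal, zonalLead]⟩
  | i + 2 => by
    obtain ⟨W, hW⟩ := exists_zonal_eq z (i + 1)
    refine ⟨C ((((i : ℝ) + 1) + Fintype.card σ - 2)⁻¹) *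
      (C (2 * ((i : ℝ) + 1) + Fintype.card σ - 2) * (linearForm z * W)
        - C ((i : ℝ) + 1) * zonal z i), ?_⟩
    rw [zonal, hW, zonalLead, div_eq_mul_inv, map_mul, map_mul]
    ring

lemma fischer_zonal (hn : 2 ≤ Fintype.card σ) (hy : y ⬝ᵥ y = 1) (hz : z ⬝ᵥ z = 1) (i : ℕ) :
    fischer (zonal y i) (zonal z i)
      = zonalLead (Fintype.card σ) i * i.factorial * geg (Fintype.card σ) i (y ⬝ᵥ z) := by
  obtain ⟨W, hW⟩ := exists_zonal_eq y i
  rw [hW, map_add, LinearMap.add_apply, fischer_sumSq_mul, laplacian_zonal hn hz, map_zero,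
    add_zero, C_mul', map_smul, LinearMap.smul_apply, fischer_linearForm_pow y
    (isHomogeneous_zonal z i), eval_zonal hy, dotProduct_comm, smul_eq_mul]
  ring

end Zonal

end MvPolynomial

open MvPolynomial RealInnerProductSpace in
theorem geg_posSemidef {ι : Type*} [Fintype ι] (hn : 2 ≤ Fintype.card ι)
    (s : Finset (EuclideanSpace ℝ ι)) (hs : ∀ x ∈ s, ‖x‖ = 1) (w : EuclideanSpace ℝ ι → ℝ)
    (i : ℕ) : 0 ≤ ∑ x ∈ s, ∑ y ∈ s, w x * w y * geg (Fintype.card ι) i ⟪x, y⟫ := by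
  have hdot : ∀ x y : EuclideanSpace ℝ ι, x.ofLp ⬝ᵥ y.ofLp = ⟪x, y⟫ := fun x y => by
    simp [EuclideanSpace.inner_eq_star_dotProduct, dotProduct_comm]
  have hunit : ∀ x ∈ s, x.ofLp ⬝ᵥ x.ofLp = 1 := fun x hx => by
    rw [hdot, real_inner_self_eq_norm_sq, hs x hx, one_pow]
  have hgram := fischer_self_nonneg (∑ x ∈ s, C (w x) * zonal x.ofLp i)
  have hexpand : fischer (∑ x ∈ s, C (w x) * zonal x.ofLp i) (∑ x ∈ s, C (w x) * zonal x.ofLp i)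
      = zonalLead (Fintype.card ι) i * i.factorial
        * ∑ x ∈ s, ∑ y ∈ s, w x * w y * geg (Fintype.card ι) i ⟪x, y⟫ := by
    simp only [map_sum, LinearMap.sum_apply, C_mul', map_smul, LinearMap.smul_apply, smul_eq_mul,
      mul_sum]
    refine sum_congr rfl fun x hx => sum_congr rfl fun y hy => ?_
    rw [fischer_zonal hn (hunit y hy) (hunit x hx), hdot, real_inner_comm]
    ring
  have hκ : 0 < zonalLead (Fintype.card ι) i * i.factorial :=
    mul_pos (zonalLead_pos hn i) (Nat.cast_pos.2 i.factorial_pos)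
  exact (mul_nonneg_iff_of_pos_left hκ).1 (hexpand ▸ hgram)

open RealInnerProductSpace in
theorem card_mul_sub_le_sum_offDiag {E : Type*} [NormedAddCommGroup E] [InnerProductSpace ℝ E]
    [DecidableEq E] (P : ℕ → ℝ → ℝ) (hP₀ : ∀ t, P 0 t = 1) (C : Finset E)
    (hC : ∀ x ∈ C, ‖x‖ = 1) (hP : ∀ i, 0 ≤ ∑ x ∈ C, ∑ y ∈ C, P i ⟪x, y⟫) (f : ℝ → ℝ) (m : ℕ)
    (c : ℕ → ℝ) (hf : ∀ t, f t = ∑ i ∈ range (m + 1), c i * P i t)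
    (hc : ∀ i : ℕ, 1 ≤ i → i ≤ m → 0 ≤ c i) :
    #C * (c 0 * #C - f 1) ≤ ∑ p ∈ (C ×ˢ C).filter (fun p => p.1 ≠ p.2), f ⟪p.1, p.2⟫ := by
  have hdiag : ∑ p ∈ (C ×ˢ C).filter (fun p => ¬p.1 ≠ p.2), f ⟪p.1, p.2⟫ = #C * f 1 := by
    rw [sum_filter, sum_product]
    simp only [not_not, sum_ite_eq]
    rw [sum_congr rfl fun x hx => by rw [if_pos hx, real_inner_self_eq_norm_sq, hC x hx, one_pow],
      sum_const, nsmul_eq_mul]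
  have htotal : c 0 * #C ^ 2 ≤ ∑ p ∈ C ×ˢ C, f ⟪p.1, p.2⟫ := by
    have hexpand : ∑ p ∈ C ×ˢ C, f ⟪p.1, p.2⟫
        = ∑ i ∈ range (m + 1), c i * ∑ x ∈ C, ∑ y ∈ C, P i ⟪x, y⟫ := by
      simp only [hf, sum_product, mul_sum]
      symm
      rw [sum_comm]
      exact sum_congr rfl fun x _ => sum_comm
    have hhigher : 0 ≤ ∑ i ∈ range m, c (i + 1) * ∑ x ∈ C, ∑ y ∈ C, P (i + 1) ⟪x, y⟫ :=
      sum_nonneg fun i hi => mul_nonneg (hc _ (by omega) (by simp at hi; omega)) (hP _)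
    rw [hexpand, sum_range_succ']
    simp only [hP₀, sum_const, nsmul_eq_mul, mul_one]
    linarith
  rw [← sum_filter_add_sum_filter_not (C ×ˢ C) (fun p => p.1 ≠ p.2), hdiag] at htotal
  linarith

open scoped RealInnerProductSpace ENNReal Classical

theorem LP_bound_spherical_energy_general (n M : ℕ) (hn : 2 ≤ n)
    (h : ℝ → ℝ≥0∞)
    (f : ℝ → ℝ) (m : ℕ) (c : ℕ → ℝ)
    (hf : ∀ t : ℝ, f t = ∑ i ∈ Finset.range (m + 1), c i * geg n i t)
    (hC1 : ∀ t ∈ Set.Icc (-1 : ℝ) 1, ENNReal.ofReal (f t) ≤ h t)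
    (hC2b : ∀ i : ℕ, 1 ≤ i → i ≤ m → 0 ≤ c i)
    (C : Finset (EuclideanSpace ℝ (Fin n)))
    (hsph : ∀ x ∈ C, ‖x‖ = 1) (hCM : C.card = M) :
    ENNReal.ofReal ((M : ℝ) * (c 0 * M - f 1)) ≤
      ∑ p ∈ (C ×ˢ C).filter (fun p => p.1 ≠ p.2), h ⟪p.1, p.2⟫ := by
  have hpsd : ∀ i, 0 ≤ ∑ x ∈ C, ∑ y ∈ C, geg n i ⟪x, y⟫ := fun i => by
    simpa using geg_posSemidef (by simpa using hn) C hsph (fun _ => 1) i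
  have hbound := card_mul_sub_le_sum_offDiag (geg n) (fun _ => rfl) C hsph hpsd f m c hf hC2b
  rw [hCM] at hbound
  calc ENNReal.ofReal ((M : ℝ) * (c 0 * M - f 1))
      ≤ ENNReal.ofReal (∑ p ∈ (C ×ˢ C).filter (fun p => p.1 ≠ p.2), f ⟪p.1, p.2⟫) :=
        ENNReal.ofReal_le_ofReal hbound
    _ ≤ ∑ p ∈ (C ×ˢ C).filter (fun p => p.1 ≠ p.2), ENNReal.ofReal (f ⟪p.1, p.2⟫) :=
        le_sum_of_subadditive _ ENNReal.ofReal_zero.le (fun _ _ => ENNReal.ofReal_add_le) _ _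
    _ ≤ ∑ p ∈ (C ×ˢ C).filter (fun p => p.1 ≠ p.2), h ⟪p.1, p.2⟫ :=
        sum_le_sum fun p hp => by
          obtain ⟨hp₁, hp₂⟩ := mem_product.1 (mem_filter.1 hp).1
          exact hC1 _ (real_inner_mem_Icc_of_norm_eq_one (hsph _ hp₁) (hsph _ hp₂))

theorem LP_bound_spherical_energy (n M : ℕ) (hn : 2 ≤ n) (hM : 2 ≤ M)
    (h : ℝ → ℝ≥0∞)
    (f : ℝ → ℝ) (m : ℕ) (c : ℕ → ℝ)
    (hf : ∀ t : ℝ, f t = ∑ i ∈ Finset.range (m + 1), c i * geg n i t)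
    (hC1 : ∀ t ∈ Set.Icc (-1 : ℝ) 1, ENNReal.ofReal (f t) ≤ h t)
    (hC2a : 0 < c 0) (hC2b : ∀ i : ℕ, 1 ≤ i → i ≤ m → 0 ≤ c i)
    (C : Finset (EuclideanSpace ℝ (Fin n)))
    (hsph : ∀ x ∈ C, ‖x‖ = 1) (hCM : C.card = M) :
    ENNReal.ofReal ((M : ℝ) * (c 0 * M - f 1)) ≤
      ∑ p ∈ (C ×ˢ C).filter (fun p => p.1 ≠ p.2), h ⟪p.1, p.2⟫ :=
  LP_bound_spherical_energy_general n M hn h f m c hf hC1 hC2b C hsph hCM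
end
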